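/- arXiv:2111.08399 — 2 statements merged into one kernel-verified Lean document; each statement's English description precedes it below -/
import Mathlib

section
/- Let g be a 7-dimensional real Lie algebra with Chevalley–Eilenberg differential d on Λg*, and let X be a nonzero central element of g. Let ω ∈ Λ²g*, ψ₊ ∈ Λ³g* and η ∈ g* satisfy ι_X ψ₊ = 0 and ω ∧ ψ₊ = 0. If ω ∧ ω ∧ dη = −2·ψ₊ ∧ dω, then the 3-form φ = ω ∧ η + ψ₊ satisfies φ ∧ dφ = 0. (This is the purity part of Theorem 'construction' of the paper.) -/
set_option synthInstance.maxHeartbeats 1000000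
set_option maxHeartbeats 1000000

open ExteriorAlgebra Module

noncomputable section

/-- The degree-`k` homogeneous component of the exterior algebra of `V`. -/
def degPart (V : Type*) [AddCommGroup V] [Module ℝ V] (k : ℕ) :
    Submodule ℝ (ExteriorAlgebra ℝ V) :=
  LinearMap.range (ExteriorAlgebra.ι ℝ : V →ₗ[ℝ] ExteriorAlgebra ℝ V) ^ k

/-- `c` is the interior product (contraction) with the vector `X : V`, acting on the exterior
algebra `Λ V*` of the dual of `V`: it is an odd antiderivation which on a 1-form `α` gives the
scalar `α(X)`. -/
def IsContraction {V : Type*} [AddCommGroup V] [Module ℝ V] (X : V)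
    (c : ExteriorAlgebra ℝ (Dual ℝ V) →ₗ[ℝ] ExteriorAlgebra ℝ (Dual ℝ V)) : Prop :=
  (∀ k, ∀ x ∈ degPart (Dual ℝ V) k, ∀ y,
      c (x * y) = c x * y + ((-1 : ℝ)) ^ k • (x * c y)) ∧
  (∀ α : Dual ℝ V, c (ExteriorAlgebra.ι ℝ α) = algebraMap ℝ _ (α X))

variable {g : Type*} [LieRing g] [LieAlgebra ℝ g]

/-- `d` is the Chevalley–Eilenberg differential of `g` on `Λ g*`, expressed with respect to a
basis `b` of `g`: it raises degree by one, is an odd derivation, and on 1-forms it is given by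
`dα = -Σ_{i<j} α([b i, b j]) bⁱ ∧ bʲ` (which encodes `dα(x,y) = -α([x,y])`). -/
def IsCEDifferential {n : ℕ} (b : Basis (Fin n) ℝ g)
    (d : ExteriorAlgebra ℝ (Dual ℝ g) →ₗ[ℝ] ExteriorAlgebra ℝ (Dual ℝ g)) : Prop :=
  (∀ k, ∀ x ∈ degPart (Dual ℝ g) k, d x ∈ degPart (Dual ℝ g) (k + 1)) ∧
  (∀ k, ∀ x ∈ degPart (Dual ℝ g) k, ∀ y,
      d (x * y) = d x * y + ((-1 : ℝ)) ^ k • (x * d y)) ∧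
  (∀ α : Dual ℝ g, d (ExteriorAlgebra.ι ℝ α) =
    (-(2⁻¹ : ℝ)) • ∑ i, ∑ j, α ⁅b i, b j⁆ •
      (ExteriorAlgebra.ι ℝ (b.dualBasis i) * ExteriorAlgebra.ι ℝ (b.dualBasis j)))

/-!
Since `X` is central, the Cartan formula gives `ι_X d + d ι_X = 0`, so for the odd form `φ`
we get `ι_X (φ ∧ dφ) = ι_X φ ∧ dφ + φ ∧ d(ι_X φ)`. Writing `a = ι_X ω`, we have
`ι_X φ = a ∧ η + η(X) ω`. The `η(X)`-part of the right-hand side is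
`η(X) (ω ∧ ω ∧ dη + 2 ψ₊ ∧ dω)`, which vanishes by hypothesis; the remaining part vanishes
because contracting the hypothesis with `X` gives `a ∧ ω ∧ dη = -ψ₊ ∧ da`. Finally `φ ∧ dφ`
has top degree `7`, and a top-degree form whose contraction with a nonzero vector vanishes is
zero.
-/

section DegPart

variable {V : Type*} [AddCommGroup V] [Module ℝ V]

lemma degPart_mul_mem {j k : ℕ} {x y : ExteriorAlgebra ℝ V}
    (hx : x ∈ degPart V j) (hy : y ∈ degPart V k) : x * y ∈ degPart V (j + k) := by
  rw [degPart, pow_add]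
  exact Submodule.mul_mem_mul hx hy

lemma ι_mem_degPart_one (v : V) : ι ℝ v ∈ degPart V 1 := by
  rw [degPart, pow_one]
  exact ⟨v, rfl⟩

lemma algebraMap_mem_degPart_zero (r : ℝ) : algebraMap ℝ (ExteriorAlgebra ℝ V) r ∈ degPart V 0 := by
  rw [degPart, pow_zero]
  exact Submodule.mem_one.2 ⟨r, rfl⟩

lemma exists_algebraMap_eq_of_mem_degPart_zero {x : ExteriorAlgebra ℝ V} (hx : x ∈ degPart V 0) :
    ∃ r : ℝ, algebraMap ℝ (ExteriorAlgebra ℝ V) r = x := by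
  rw [degPart, pow_zero] at hx
  exact Submodule.mem_one.1 hx

lemma ι_mul_mem_degPart_succ (v : V) {k : ℕ} {z : ExteriorAlgebra ℝ V} (hz : z ∈ degPart V k) :
    ι ℝ v * z ∈ degPart V (k + 1) := by
  rw [degPart, pow_succ']
  exact Submodule.mul_mem_mul ⟨v, rfl⟩ hz

@[elab_as_elim]
lemma degPart_induction {P : ∀ k x, x ∈ degPart V k → Prop}
    (algebraMap : ∀ r, P 0 (algebraMap ℝ _ r) (algebraMap_mem_degPart_zero r))
    (ι_mul : ∀ k v z (hz : z ∈ degPart V k), P k z hz →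
      P (k + 1) (ι ℝ v * z) (ι_mul_mem_degPart_succ v hz))
    (add : ∀ k x y hx hy, P k x hx → P k y hy → P k (x + y) (add_mem hx hy))
    {k : ℕ} {x : ExteriorAlgebra ℝ V} (hx : x ∈ degPart V k) : P k x hx := by
  induction k generalizing x with
  | zero =>
    obtain ⟨r, rfl⟩ := exists_algebraMap_eq_of_mem_degPart_zero hx
    exact algebraMap r
  | succ k ih =>
    have mem {y} : y ∈ degPart V (k + 1) ↔ y ∈ LinearMap.range (ι ℝ) * degPart V k := by
      rw [degPart, degPart, pow_succ']
    obtain hx' := mem.1 hx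
    revert hx
    induction hx' using Submodule.mul_induction_on' with
    | mem_mul_mem m hm z hz =>
      obtain ⟨v, rfl⟩ := hm
      exact fun _ => ι_mul k v z hz (ih hz)
    | add x hx y hy hPx hPy => exact fun _ => add _ x y _ _ (hPx (mem.2 hx)) (hPy (mem.2 hy))

lemma ι_mul_eq_smul_mul_ι {k : ℕ} {y : ExteriorAlgebra ℝ V} (hy : y ∈ degPart V k) (v : V) :
    ι ℝ v * y = (-1 : ℝ) ^ k • (y * ι ℝ v) := by
  induction hy using degPart_induction with
  | algebraMap r => rw [pow_zero, one_smul, Algebra.commutes]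
  | ι_mul k w z _ ih =>
    have hvw : ι ℝ v * ι ℝ w = -(ι ℝ w * ι ℝ v) := eq_neg_of_add_eq_zero_left (ι_add_mul_swap v w)
    rw [← mul_assoc, hvw, neg_mul, mul_assoc, ih, mul_smul_comm, pow_succ, mul_smul, ← mul_assoc]
    module
  | add k x y _ _ hx hy => rw [mul_add, add_mul, smul_add, hx, hy]

lemma mul_eq_smul_mul_of_mem_degPart {j k : ℕ} {x y : ExteriorAlgebra ℝ V}
    (hx : x ∈ degPart V j) (hy : y ∈ degPart V k) :
    x * y = (-1 : ℝ) ^ (j * k) • (y * x) := by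
  induction hx using degPart_induction with
  | algebraMap r => rw [zero_mul, pow_zero, one_smul, Algebra.commutes]
  | ι_mul j w z _ ih =>
    rw [mul_assoc, ih, mul_smul_comm, ← mul_assoc, ι_mul_eq_smul_mul_ι hy, smul_mul_assoc,
      smul_smul, mul_assoc, ← pow_add, add_one_mul]
  | add j x₁ x₂ _ _ h₁ h₂ => rw [add_mul, mul_add, smul_add, h₁, h₂]

lemma ι_mul_left_comm {k : ℕ} {y : ExteriorAlgebra ℝ V} (hy : y ∈ degPart V k) (v : V)
    (w : ExteriorAlgebra ℝ V) :
    ι ℝ v * (y * w) = (-1 : ℝ) ^ k • (y * (ι ℝ v * w)) := by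
  rw [← mul_assoc, ι_mul_eq_smul_mul_ι hy, smul_mul_assoc, mul_assoc]

lemma degPart_eq_bot_of_finrank_lt [FiniteDimensional ℝ V] {k : ℕ} (hk : finrank ℝ V < k) :
    degPart V k = ⊥ :=
  show ⋀[ℝ]^k V = ⊥ from Submodule.finrank_eq_zero.1 <|
    (exteriorPower.finrank_eq (R := ℝ) (M := V) k).trans (Nat.choose_eq_zero_of_lt hk)

end DegPart

namespace IsContraction

variable {V : Type*} [AddCommGroup V] [Module ℝ V] {X : V}
  {c : ExteriorAlgebra ℝ (Dual ℝ V) →ₗ[ℝ] ExteriorAlgebra ℝ (Dual ℝ V)}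

lemma map_algebraMap (hc : IsContraction X c) (r : ℝ) :
    c (algebraMap ℝ _ r) = 0 := by
  have h := hc.1 0 1 (by simpa using algebraMap_mem_degPart_zero (V := Dual ℝ V) 1) 1
  simp only [mul_one, one_mul, pow_zero, one_smul] at h
  rw [Algebra.algebraMap_eq_smul_one, map_smul, (left_eq_add.1 h : c 1 = 0), smul_zero]

lemma map_ι_mul (hc : IsContraction X c) (α : Dual ℝ V) (z : ExteriorAlgebra ℝ (Dual ℝ V)) :
    c (ι ℝ α * z) = α X • z - ι ℝ α * c z := by
  rw [hc.1 1 _ (ι_mem_degPart_one α), hc.2, pow_one, neg_one_smul, ← Algebra.smul_def,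
    sub_eq_add_neg]

lemma map_mem_degPart (hc : IsContraction X c) {k : ℕ} {x : ExteriorAlgebra ℝ (Dual ℝ V)}
    (hx : x ∈ degPart (Dual ℝ V) (k + 1)) : c x ∈ degPart (Dual ℝ V) k := by
  induction k generalizing x with
  | zero =>
    rw [degPart, pow_one] at hx
    obtain ⟨α, rfl⟩ := hx
    rw [hc.2]
    exact algebraMap_mem_degPart_zero _
  | succ k ih =>
    rw [degPart, pow_succ'] at hx
    refine Submodule.mul_induction_on hx (fun m hm z hz => ?_) (fun x y hx hy => ?_)
    · obtain ⟨α, rfl⟩ := hm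
      rw [hc.map_ι_mul]
      exact sub_mem (Submodule.smul_mem _ _ hz) (add_comm k 1 ▸ ι_mul_mem_degPart_succ α (ih hz))
    · rw [map_add]
      exact add_mem hx hy

lemma eq_zero_of_map_eq_zero [FiniteDimensional ℝ V] (hc : IsContraction X c) (hX : X ≠ 0)
    {x : ExteriorAlgebra ℝ (Dual ℝ V)} (hx : x ∈ degPart (Dual ℝ V) (finrank ℝ V))
    (h : c x = 0) : x = 0 := by
  obtain ⟨α, hα⟩ : ∃ α : Dual ℝ V, α X = 1 := Module.Projective.exists_dual_eq_one ℝ hX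
  have htop : ι ℝ α * x = 0 := by
    have hmem := ι_mul_mem_degPart_succ α hx
    rwa [degPart_eq_bot_of_finrank_lt (by rw [Subspace.dual_finrank_eq]; omega),
      Submodule.mem_bot] at hmem
  simpa [htop, hα, h] using (hc.map_ι_mul α x).symm

end IsContraction

namespace IsCEDifferential

variable {n : ℕ} {b : Basis (Fin n) ℝ g}
  {d : ExteriorAlgebra ℝ (Dual ℝ g) →ₗ[ℝ] ExteriorAlgebra ℝ (Dual ℝ g)}

lemma map_algebraMap (hd : IsCEDifferential b d) (r : ℝ) : d (algebraMap ℝ _ r) = 0 := by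
  have h := hd.2.1 0 1 (by simpa using algebraMap_mem_degPart_zero (V := Dual ℝ g) 1) 1
  simp only [mul_one, one_mul, pow_zero, one_smul] at h
  rw [Algebra.algebraMap_eq_smul_one, map_smul, (left_eq_add.1 h : d 1 = 0), smul_zero]

lemma map_ι_mul (hd : IsCEDifferential b d) (α : Dual ℝ g) (z : ExteriorAlgebra ℝ (Dual ℝ g)) :
    d (ι ℝ α * z) = d (ι ℝ α) * z - ι ℝ α * d z := by
  rw [hd.2.1 1 _ (ι_mem_degPart_one α), pow_one, neg_one_smul, sub_eq_add_neg]

variable {X : g} {c : ExteriorAlgebra ℝ (Dual ℝ g) →ₗ[ℝ] ExteriorAlgebra ℝ (Dual ℝ g)}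

lemma contraction_map_ι (hd : IsCEDifferential b d) (hc : IsContraction X c)
    (hX : ∀ Y : g, ⁅X, Y⁆ = 0) (α : Dual ℝ g) : c (d (ι ℝ α)) = 0 := by
  have hcu (i j : Fin n) : c (ι ℝ (b.dualBasis i) * ι ℝ (b.dualBasis j)) =
      b.dualBasis i X • ι ℝ (b.dualBasis j) - b.dualBasis j X • ι ℝ (b.dualBasis i) := by
    rw [hc.map_ι_mul, hc.2, ← Algebra.commutes, ← Algebra.smul_def]
  have hleft (y : g) : ∑ i, b.dualBasis i X * α ⁅b i, y⁆ = 0 :=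
    calc _ = α ⁅∑ i, b.repr X i • b i, y⁆ := by
          simp only [sum_lie, smul_lie, map_sum, map_smul, smul_eq_mul, b.dualBasis_apply]
      _ = 0 := by rw [b.sum_repr, hX, map_zero]
  have hright (y : g) : ∑ j, b.dualBasis j X * α ⁅y, b j⁆ = 0 :=
    calc _ = α ⁅y, ∑ j, b.repr X j • b j⁆ := by
          simp only [lie_sum, lie_smul, map_sum, map_smul, smul_eq_mul, b.dualBasis_apply]
      _ = 0 := by rw [b.sum_repr, ← lie_skew, hX, neg_zero, map_zero]
  rw [hd.2.2, map_smul, map_sum]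
  simp only [map_sum, map_smul, hcu, smul_sub, smul_smul, Finset.sum_sub_distrib]
  rw [Finset.sum_comm]
  simp only [← Finset.sum_smul, mul_comm (α _), hleft, hright, zero_smul,
    Finset.sum_const_zero, sub_self]

lemma map_contraction_add_contraction_map (hd : IsCEDifferential b d) (hc : IsContraction X c)
    (hX : ∀ Y : g, ⁅X, Y⁆ = 0) {k : ℕ} {x : ExteriorAlgebra ℝ (Dual ℝ g)}
    (hx : x ∈ degPart (Dual ℝ g) k) : d (c x) + c (d x) = 0 := by
  induction hx using degPart_induction with
  | algebraMap r => rw [hc.map_algebraMap, hd.map_algebraMap, map_zero, map_zero, add_zero]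
  | ι_mul k α z _ ih =>
    have hcdα : c (d (ι ℝ α) * z) = d (ι ℝ α) * c z := by
      rw [hc.1 2 _ (hd.1 1 _ (ι_mem_degPart_one α)), hd.contraction_map_ι hc hX, zero_mul,
        zero_add, neg_one_sq, one_smul]
    rw [hc.map_ι_mul, hd.map_ι_mul, map_sub, map_smul, map_sub, hd.map_ι_mul, hcdα,
      hc.map_ι_mul, ← mul_zero (ι ℝ α), ← ih, mul_add]
    abel
  | add k x y _ _ hx hy =>
    rw [map_add, map_add, map_add, map_add, add_add_add_comm, hx, hy, add_zero]

lemma contraction_mul_map_self (hd : IsCEDifferential b d) (hc : IsContraction X c)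
    (hX : ∀ Y : g, ⁅X, Y⁆ = 0) {k : ℕ} (hk : Odd k) {φ : ExteriorAlgebra ℝ (Dual ℝ g)}
    (hφ : φ ∈ degPart (Dual ℝ g) k) : c (φ * d φ) = c φ * d φ + φ * d (c φ) := by
  rw [hc.1 k φ hφ, hk.neg_one_pow, neg_one_smul, ← mul_neg,
    eq_neg_of_add_eq_zero_right (hd.map_contraction_add_contraction_map hc hX hφ), neg_neg]

variable {ω ψ : ExteriorAlgebra ℝ (Dual ℝ g)}

lemma mul_map_add_map_mul_of_mul_eq_zero (hd : IsCEDifferential b d)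
    (hω : ω ∈ degPart (Dual ℝ g) 2) (hψ : ψ ∈ degPart (Dual ℝ g) 3) (hωψ : ω * ψ = 0)
    (η : Dual ℝ g) :
    ω * d (ω * ι ℝ η + ψ) + (ω * ι ℝ η + ψ) * d ω = ω * ω * d (ι ℝ η) + (2 : ℝ) • (ψ * d ω) := by
  have hdω := hd.1 2 ω hω
  have hηdω : ι ℝ η * d ω = -(d ω * ι ℝ η) := by
    rw [ι_mul_eq_smul_mul_ι hdω η]; norm_num
  have hωdψ : ω * d ψ = ψ * d ω := by
    have hdωψ : d ω * ψ = -(ψ * d ω) := by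
      rw [mul_eq_smul_mul_of_mem_degPart hdω hψ]; norm_num
    have h := hd.2.1 2 ω hω ψ
    rw [hωψ, map_zero, hdωψ, neg_one_sq, one_smul] at h
    exact (neg_add_eq_zero.1 h.symm).symm
  rw [map_add, hd.2.1 2 ω hω, neg_one_sq, one_smul]
  simp only [mul_add, add_mul, mul_assoc, hηdω, hωdψ, mul_neg]
  module

lemma contraction_mul_mul_map_ι (hd : IsCEDifferential b d)
    (hc : IsContraction X c) (hX : ∀ Y : g, ⁅X, Y⁆ = 0)
    (hω : ω ∈ degPart (Dual ℝ g) 2) (hψ : ψ ∈ degPart (Dual ℝ g) 3) (hcψ : c ψ = 0)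
    {η : Dual ℝ g} (h : ω * ω * d (ι ℝ η) = (-2 : ℝ) • (ψ * d ω)) :
    c ω * (ω * d (ι ℝ η)) = -(ψ * d (c ω)) := by
  have hωcω : ω * c ω = c ω * ω := by
    simpa using mul_eq_smul_mul_of_mem_degPart hω (hc.map_mem_degPart (k := 1) hω)
  have hcdω : c (d ω) = -d (c ω) :=
    eq_neg_of_add_eq_zero_right (hd.map_contraction_add_contraction_map hc hX hω)
  have h' := congrArg c h
  rw [hc.1 4 _ (degPart_mul_mem hω hω), hd.contraction_map_ι hc hX, hc.1 2 ω hω, hωcω,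
    map_smul, hc.1 3 ψ hψ, hcψ, hcdω] at h'
  simp only [even_two.neg_one_pow, one_smul, smul_zero, mul_zero, zero_mul, zero_add, add_zero,
    add_mul, mul_assoc, mul_neg] at h'
  refine smul_right_injective _ (two_ne_zero' ℝ) ?_
  linear_combination (norm := module) h'

lemma mul_ι_mul_map_add_map_mul_eq_zero (hd : IsCEDifferential b d)
    {a : ExteriorAlgebra ℝ (Dual ℝ g)} (ha : a ∈ degPart (Dual ℝ g) 1) (hω : ω ∈ degPart (Dual ℝ g) 2)
    (hψ : ψ ∈ degPart (Dual ℝ g) 3) (haψ : a * ψ = 0) {η : Dual ℝ g}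
    (h : a * (ω * d (ι ℝ η)) = -(ψ * d a)) :
    a * ι ℝ η * d (ω * ι ℝ η + ψ) + (ω * ι ℝ η + ψ) * d (a * ι ℝ η) = 0 := by
  have hψa : ψ * a = 0 := by rw [mul_eq_smul_mul_of_mem_degPart hψ ha, haψ, smul_zero]
  have hωa : ω * a = a * ω := by rw [mul_eq_smul_mul_of_mem_degPart hω ha]; norm_num
  have hadψ : a * d ψ = ψ * d a := by
    have hdaψ : d a * ψ = ψ * d a := by
      rw [mul_eq_smul_mul_of_mem_degPart (hd.1 1 a ha) hψ]; norm_num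
    have h' := hd.2.1 1 a ha ψ
    rw [haψ, map_zero, hdaψ, pow_one, neg_one_smul] at h'
    exact (add_neg_eq_zero.1 h'.symm).symm
  rw [map_add, hd.2.1 2 ω hω, hd.2.1 1 a ha, neg_one_sq, one_smul, pow_one, neg_one_smul]
  simp only [mul_add, add_mul, mul_neg, mul_assoc, ι_mul_left_comm hω, ι_mul_left_comm ha,
    ι_mul_left_comm (hd.1 2 ω hω), ι_mul_left_comm (hd.1 1 a ha),
    ι_mul_eq_smul_mul_ι (hd.1 3 ψ hψ), ι_mul_eq_smul_mul_ι (hd.1 1 _ (ι_mem_degPart_one η)),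
    ι_sq_zero, mul_smul_comm, mul_zero, smul_zero]
  norm_num
  rw [← mul_assoc a (d ψ), hadψ, ← mul_assoc ψ a, hψa, zero_mul, ← mul_assoc ω a, hωa,
    mul_assoc a ω, ← mul_assoc ω, ← mul_assoc a, h]
  noncomm_ring

end IsCEDifferential

/-- purity part of Theorem `construction`.  Let `g` be a 7-dimensional real Lie
algebra with Chevalley–Eilenberg differential `d`, and `X` a nonzero central element.  Let
`ω ∈ Λ²g*`, `ψ₊ ∈ Λ³g*`, `η ∈ g*` with `ι_X ψ₊ = 0` and `ω ∧ ψ₊ = 0`.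
If `ω ∧ ω ∧ dη = -2 ψ₊ ∧ dω`, then `φ = ω ∧ η + ψ₊` satisfies `φ ∧ dφ = 0`. -/
theorem purity_of_conditions (b : Basis (Fin 7) ℝ g)
    (d : ExteriorAlgebra ℝ (Dual ℝ g) →ₗ[ℝ] ExteriorAlgebra ℝ (Dual ℝ g))
    (hd : IsCEDifferential b d)
    (X : g) (hX : X ≠ 0) (hXc : ∀ Y : g, ⁅X, Y⁆ = 0)
    (cX : ExteriorAlgebra ℝ (Dual ℝ g) →ₗ[ℝ] ExteriorAlgebra ℝ (Dual ℝ g))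
    (hcX : IsContraction X cX)
    (ω ψp : ExteriorAlgebra ℝ (Dual ℝ g)) (η : Dual ℝ g)
    (hω : ω ∈ degPart (Dual ℝ g) 2) (hψp : ψp ∈ degPart (Dual ℝ g) 3)
    (h1 : cX ψp = 0) (h2 : ω * ψp = 0)
    (h3 : ω * ω * d (ExteriorAlgebra.ι ℝ η) = (-2 : ℝ) • (ψp * d ω)) :
    (ω * ExteriorAlgebra.ι ℝ η + ψp) * d (ω * ExteriorAlgebra.ι ℝ η + ψp) = 0 := by
  have : FiniteDimensional ℝ g := b.finiteDimensional_of_finite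
  set φ := ω * ι ℝ η + ψp with hφ_def
  have hφ : φ ∈ degPart (Dual ℝ g) 3 := add_mem (degPart_mul_mem hω (ι_mem_degPart_one η)) hψp
  have hcφ : cX φ = cX ω * ι ℝ η + η X • ω := by
    rw [hφ_def, map_add, h1, add_zero, hcX.1 2 ω hω, hcX.2, neg_one_sq, one_smul,
      ← Algebra.commutes, ← Algebra.smul_def]
  have haψ : cX ω * ψp = 0 := by simpa [h1, h2] using (hcX.1 2 ω hω ψp).symm
  have hφdφ : φ * d φ ∈ degPart (Dual ℝ g) (finrank ℝ g) := by
    rw [finrank_eq_card_basis b, Fintype.card_fin]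
    exact degPart_mul_mem hφ (hd.1 3 φ hφ)
  refine hcX.eq_zero_of_map_eq_zero hX hφdφ ?_
  calc cX (φ * d φ) = cX φ * d φ + φ * d (cX φ) :=
        hd.contraction_mul_map_self hcX hXc (by decide) hφ
    _ = (cX ω * ι ℝ η * d φ + φ * d (cX ω * ι ℝ η)) + η X • (ω * d φ + φ * d ω) := by
      rw [hcφ, map_add d (cX ω * _), map_smul, add_mul, mul_add, smul_mul_assoc, mul_smul_comm]
      module
    _ = 0 + η X • (ω * ω * d (ι ℝ η) + (2 : ℝ) • (ψp * d ω)) := by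
      rw [hd.mul_ι_mul_map_add_map_mul_eq_zero (hcX.map_mem_degPart hω) hω hψp haψ
        (hd.contraction_mul_mul_map_ι hcX hXc hω hψp h1 h3),
        hd.mul_map_add_map_mul_of_mul_eq_zero hω hψp h2]
    _ = 0 := by
      rw [h3]
      module
end
end

section
/- The 7-dimensional indecomposable 2-step nilpotent Lie algebra 17, with basis e₁,…,e₇ and structure equations de⁷ = e^{12}+e^{34}+e^{56} (all other de^i = 0), admits a purely coclosed G2-structure: there exists a basis f¹,…,f⁷ of its dual space such that the 4-form ∗φ = f^{1234}+f^{1256}+f^{1367}+f^{1457}+f^{2357}−f^{2467}+f^{3456} is d-closed and the 3-form φ = f^{127}+f^{347}+f^{567}+f^{135}−f^{146}−f^{236}−f^{245} satisfies φ ∧ dφ = 0. (Part of Theorem '2step-indecomposable-pure' of the paper; the structure is built from ω = −e^{12}+(1/2)e^{34}−e^{56}, ψ₋ = e^{135}+e^{146}−e^{236}+e^{245}, η = e⁷.) -/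
set_option synthInstance.maxHeartbeats 1000000
set_option maxHeartbeats 1000000

open ExteriorAlgebra Module

noncomputable section

variable {g : Type*} [LieRing g] [LieAlgebra ℝ g]

/-- The 4-form `∗φ = e^{1234}+e^{1256}+e^{1367}+e^{1457}+e^{2357}-e^{2467}+e^{3456}` built out
of a family `f` of seven 1-forms (indexed from 0). -/
def starPhiForm {W : Type*} [AddCommGroup W] [Module ℝ W] (f : Fin 7 → W) :
    ExteriorAlgebra ℝ W :=
  let e : Fin 7 → ExteriorAlgebra ℝ W := fun i => ExteriorAlgebra.ι ℝ (f i)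
  e 0 * e 1 * e 2 * e 3 + e 0 * e 1 * e 4 * e 5 + e 0 * e 2 * e 5 * e 6 +
    e 0 * e 3 * e 4 * e 6 + e 1 * e 2 * e 4 * e 6 - e 1 * e 3 * e 5 * e 6 +
    e 2 * e 3 * e 4 * e 5

/-- The 3-form `φ = e^{127}+e^{347}+e^{567}+e^{135}-e^{146}-e^{236}-e^{245}` built out of a
family `f` of seven 1-forms (indexed from 0). -/
def phiG2Form {W : Type*} [AddCommGroup W] [Module ℝ W] (f : Fin 7 → W) :
    ExteriorAlgebra ℝ W :=
  let e : Fin 7 → ExteriorAlgebra ℝ W := fun i => ExteriorAlgebra.ι ℝ (f i)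
  e 0 * e 1 * e 6 + e 2 * e 3 * e 6 + e 4 * e 5 * e 6 + e 0 * e 2 * e 4 -
    e 0 * e 3 * e 5 - e 1 * e 2 * e 5 - e 1 * e 3 * e 4

/-- A 7-dimensional real Lie algebra admits a coclosed G₂-structure if there is a basis
`f¹,…,f⁷` of `g*` for which the 4-form `∗φ` is closed for the Chevalley–Eilenberg
differential. -/
def AdmitsCoclosedG2 (g : Type*) [LieRing g] [LieAlgebra ℝ g] : Prop :=
  ∃ (b : Basis (Fin 7) ℝ g)
    (d : ExteriorAlgebra ℝ (Dual ℝ g) →ₗ[ℝ] ExteriorAlgebra ℝ (Dual ℝ g)),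
    IsCEDifferential b d ∧
    ∃ f : Basis (Fin 7) ℝ (Dual ℝ g), d (starPhiForm fun i => f i) = 0

/-- A 7-dimensional real Lie algebra admits a purely coclosed G₂-structure if there is a basis
`f¹,…,f⁷` of `g*` for which `∗φ` is closed and moreover `φ ∧ dφ = 0`. -/
def AdmitsPurelyCoclosedG2 (g : Type*) [LieRing g] [LieAlgebra ℝ g] : Prop :=
  ∃ (b : Basis (Fin 7) ℝ g)
    (d : ExteriorAlgebra ℝ (Dual ℝ g) →ₗ[ℝ] ExteriorAlgebra ℝ (Dual ℝ g)),
    IsCEDifferential b d ∧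
    ∃ f : Basis (Fin 7) ℝ (Dual ℝ g),
      d (starPhiForm fun i => f i) = 0 ∧
      (phiG2Form fun i => f i) * d (phiG2Form fun i => f i) = 0

/-- A Lie algebra is decomposable if it is the direct sum of two nonzero ideals. -/
def Decomposable (g : Type*) [LieRing g] [LieAlgebra ℝ g] : Prop :=
  ∃ I J : LieIdeal ℝ g, I ≠ ⊥ ∧ J ≠ ⊥ ∧ I ⊓ J = ⊥ ∧ I ⊔ J = ⊤

/-- Shorthand for the 1-form `eⁱ` (the `i`-th dual basis vector) in `Λ g*`. -/
def ef {g : Type*} [LieRing g] [LieAlgebra ℝ g] (b : Basis (Fin 7) ℝ g) (i : Fin 7) :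
    ExteriorAlgebra ℝ (Dual ℝ g) :=
  ExteriorAlgebra.ι ℝ (b.dualBasis i)


/-! If `f¹,…,f⁶` are closed and `df⁷ = a f¹² + b f³⁴ + c f⁵⁶`, write `ω = f¹² + f³⁴ + f⁵⁶`, so that
`φ = ω ∧ f⁷ + ψ₊` and `∗φ = ½ ω² + ψ₋ ∧ f⁷` with `ψ₊, ψ₋` built from `f¹,…,f⁶` alone. Then
`d∗φ = -ψ₋ ∧ df⁷`, which vanishes because every monomial of `ψ₋` contains one index from each of the
pairs `{1,2}, {3,4}, {5,6}`; and `φ ∧ dφ = φ ∧ ω ∧ df⁷ = 2(a + b + c) f¹²³⁴⁵⁶⁷`.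
For the algebra `17`, the basis `fⁱ = eⁱ` (`i ≠ 6`), `f⁶ = -½ e⁶` gives `de⁷ = f¹² + f³⁴ - 2 f⁵⁶`,
so `a + b + c = 0`.
Below, indices start at `0`: `pairForm f a b c` is `a f¹² + b f³⁴ + c f⁵⁶` and `psiMinus f` is `ψ₋`. -/

namespace ExteriorAlgebra

variable {R M : Type*} [CommRing R] [AddCommGroup M] [Module R M]

theorem ι_mul_ι_mul_self (m : M) (x : ExteriorAlgebra R M) : ι R m * (ι R m * x) = 0 := by
  rw [← mul_assoc, ι_sq_zero, zero_mul]

theorem ι_mul_ι_swap (m n : M) : ι R n * ι R m = -(ι R m * ι R n) :=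
  eq_neg_of_add_eq_zero_left (ι_add_mul_swap n m)

theorem ι_mul_ι_mul_swap (m n : M) (x : ExteriorAlgebra R M) :
    ι R n * (ι R m * x) = -(ι R m * (ι R n * x)) := by
  rw [← mul_assoc, ι_mul_ι_swap, neg_mul, mul_assoc]

variable {κ : Type*} [LinearOrder κ] (f : κ → M) {i j : κ}

-- The condition `i < j` orients these rewrites, so that `simp` sorts products of the
-- `ι R (f i)` by index instead of looping.
theorem ι_mul_ι_of_lt (_ : i < j) : ι R (f j) * ι R (f i) = -(ι R (f i) * ι R (f j)) :=
  ι_mul_ι_swap _ _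

theorem ι_mul_ι_mul_of_lt (_ : i < j) (x : ExteriorAlgebra R M) :
    ι R (f j) * (ι R (f i) * x) = -(ι R (f i) * (ι R (f j) * x)) :=
  ι_mul_ι_mul_swap _ _ x

end ExteriorAlgebra

theorem IsCEDifferential.map_ι_mul_s16 {n : ℕ} {b : Basis (Fin n) ℝ g}
    {d : ExteriorAlgebra ℝ (Dual ℝ g) →ₗ[ℝ] ExteriorAlgebra ℝ (Dual ℝ g)}
    (hd : IsCEDifferential b d) (α : Dual ℝ g) (y : ExteriorAlgebra ℝ (Dual ℝ g)) :
    d (ι ℝ α * y) = d (ι ℝ α) * y - ι ℝ α * d y := by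
  have hα : ι ℝ α ∈ degPart (Dual ℝ g) 1 := by
    rw [degPart, pow_one]
    exact LinearMap.mem_range_self _ α
  rw [hd.2.1 1 _ hα y, pow_one, neg_one_smul, sub_eq_add_neg]

section G2Forms

variable {W : Type*} [AddCommGroup W] [Module ℝ W] (f : Fin 7 → W)

local notation:max "e" i:max => ι ℝ (f i)

def pairForm (a b c : ℝ) : ExteriorAlgebra ℝ W :=
  a • (e 0 * e 1) + b • (e 2 * e 3) + c • (e 4 * e 5)

def psiMinus : ExteriorAlgebra ℝ W :=
  e 0 * e 2 * e 5 + e 0 * e 3 * e 4 + e 1 * e 2 * e 4 - e 1 * e 3 * e 5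

theorem psiMinus_mul_pairForm (a b c : ℝ) : psiMinus f * pairForm f a b c = 0 := by
  simp (disch := decide) only [psiMinus, pairForm, mul_add, sub_mul, add_mul, mul_smul_comm,
    mul_assoc, ι_mul_ι_mul_of_lt f (R := ℝ), ι_mul_ι_of_lt f (R := ℝ), ι_mul_ι_mul_self,
    ι_sq_zero, mul_neg, neg_neg, mul_zero, neg_zero, sub_zero, smul_zero, add_zero]

theorem phiG2Form_mul_pairForm_mul_pairForm (a b c : ℝ) :
    phiG2Form f * (pairForm f 1 1 1 * pairForm f a b c) =
      (2 * (a + b + c)) • (e 0 * e 1 * e 2 * e 3 * e 4 * e 5 * e 6) := by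
  simp (disch := decide) only [phiG2Form, pairForm, one_smul, mul_add, sub_mul, add_mul,
    mul_smul_comm, mul_assoc, ι_mul_ι_mul_of_lt f (R := ℝ), ι_mul_ι_of_lt f (R := ℝ),
    ι_mul_ι_mul_self, ι_sq_zero, mul_neg, neg_neg, mul_zero, neg_zero, add_zero, zero_add]
  module

variable {f} {d : ExteriorAlgebra ℝ W →ₗ[ℝ] ExteriorAlgebra ℝ W}
  (hd : ∀ α y, d (ι ℝ α * y) = d (ι ℝ α) * y - ι ℝ α * d y)
  (hclosed : ∀ i, i ≠ 6 → d (ι ℝ (f i)) = 0)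
include hd hclosed

theorem d_phiG2Form : d (phiG2Form f) = pairForm f 1 1 1 * d (e 6) := by
  simp only [phiG2Form, pairForm, one_smul, mul_assoc, map_add, map_sub, hd]
  simp [hclosed, add_mul, mul_assoc]

theorem d_starPhiForm : d (starPhiForm f) = -(psiMinus f * d (e 6)) := by
  simp only [starPhiForm, psiMinus, mul_assoc, map_add, map_sub, hd]
  simp [hclosed, add_mul, sub_mul, mul_assoc]
  abel

variable {a b c : ℝ} (h6 : d (ι ℝ (f 6)) = pairForm f a b c)
include h6

theorem d_starPhiForm_eq_zero : d (starPhiForm f) = 0 := by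
  rw [d_starPhiForm hd hclosed, h6, psiMinus_mul_pairForm, neg_zero]

theorem phiG2Form_mul_d_phiG2Form :
    phiG2Form f * d (phiG2Form f) =
      (2 * (a + b + c)) • (e 0 * e 1 * e 2 * e 3 * e 4 * e 5 * e 6) := by
  rw [d_phiG2Form hd hclosed, h6, phiG2Form_mul_pairForm_mul_pairForm]

end G2Forms

/-- The Lie algebra `17` (`de⁷ = e^{12} + e^{34} + e^{56}`, all other
`deⁱ = 0`) admits a purely coclosed G₂-structure: there is a basis `f¹,…,f⁷` of its dual space
with `d(∗φ) = 0` and `φ ∧ dφ = 0`. -/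
theorem lie17_purely_coclosed
    (b : Basis (Fin 7) ℝ g)
    (d : ExteriorAlgebra ℝ (Dual ℝ g) →ₗ[ℝ] ExteriorAlgebra ℝ (Dual ℝ g))
    (hd : IsCEDifferential b d)
    (hzero : ∀ i : Fin 7, i ≤ 5 → d (ef b i) = 0)
    (h7 : d (ef b 6) = ef b 0 * ef b 1 + ef b 2 * ef b 3 + ef b 4 * ef b 5) :
    ∃ f : Basis (Fin 7) ℝ (Dual ℝ g),
      d (starPhiForm fun i => f i) = 0 ∧
      (phiG2Form fun i => f i) * d (phiG2Form fun i => f i) = 0 := by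
  let w : Fin 7 → ℝˣ := Function.update 1 5 (Units.mk0 (-2⁻¹) (by norm_num))
  let f := b.dualBasis.unitsSMul w
  have hf (i : Fin 7) : ι ℝ (f i) = (w i : ℝ) • ef b i := by
    rw [Basis.unitsSMul_apply, Units.smul_def, map_smul]
    rfl
  have hclosed (i : Fin 7) (hi : i ≠ 6) : d (ι ℝ (f i)) = 0 := by
    rw [hf, map_smul, hzero i (by omega), smul_zero]
  have h6 : d (ι ℝ (f 6)) = pairForm (fun i => f i) 1 1 (-2) := by
    simp [pairForm, hf, w, h7]
  refine ⟨f, d_starPhiForm_eq_zero hd.map_ι_mul_s16 hclosed h6, ?_⟩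
  rw [phiG2Form_mul_d_phiG2Form hd.map_ι_mul_s16 hclosed h6]
  norm_num
end
end
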